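/- Let E be a real normed space, D ⊆ E open with nonempty boundary, and let γ be a rectifiable curve in D joining z₁ to z₂. Then the quasihyperbolic length ℓ_{k_D}(γ) = ∫_γ |dz|/d_D(z) satisfies ℓ_{k_D}(γ) ≥ log(1 + ℓ(γ)/min(d_D(z₁), d_D(z₂))), where ℓ(γ) is the Euclidean length of γ. -/

import Mathlib

/-!
Since `d_D` is 1-Lipschitz, `d_D (γ t) ≤ d_D z₁ + s t`, where `s t` is the length of `γ` on
`[0, t]`. Hence the quasihyperbolic integrand `s' / d_D ∘ γ` dominates `s' / (d_D z₁ + s)`, whose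
integral is `log (1 + ℓ(γ) / d_D z₁)`. Running the curve backwards gives the bound with `z₂`.
-/

open Set Metric Real intervalIntegral

noncomputable def dD {E : Type*} [NormedAddCommGroup E] [NormedSpace ℝ E]
    (D : Set E) (z : E) : ℝ := Metric.infDist z (frontier D)

noncomputable def jD {E : Type*} [NormedAddCommGroup E] [NormedSpace ℝ E]
    (D : Set E) (z₁ z₂ : E) : ℝ :=
  Real.log (1 + dist z₁ z₂ / min (dD D z₁) (dD D z₂))

noncomputable def clen {E : Type*} [NormedAddCommGroup E] [NormedSpace ℝ E]
    (γ : ℝ → E) : ℝ := ∫ t in (0:ℝ)..1, ‖deriv γ t‖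

noncomputable def sublen {E : Type*} [NormedAddCommGroup E] [NormedSpace ℝ E]
    (γ : ℝ → E) (a b : ℝ) : ℝ := ∫ t in a..b, ‖deriv γ t‖

noncomputable def qhLen {E : Type*} [NormedAddCommGroup E] [NormedSpace ℝ E]
    (D : Set E) (γ : ℝ → E) : ℝ := ∫ t in (0:ℝ)..1, ‖deriv γ t‖ / dD D (γ t)

def IsCurveIn {E : Type*} [NormedAddCommGroup E] [NormedSpace ℝ E]
    (D : Set E) (γ : ℝ → E) (z₁ z₂ : E) : Prop :=
  ContDiffOn ℝ 1 γ (Set.Icc 0 1) ∧ γ 0 = z₁ ∧ γ 1 = z₂ ∧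
    ∀ t ∈ Set.Icc (0:ℝ) 1, γ t ∈ D

noncomputable def kD {E : Type*} [NormedAddCommGroup E] [NormedSpace ℝ E]
    (D : Set E) (z₁ z₂ : E) : ℝ :=
  sInf {l : ℝ | ∃ γ : ℝ → E, IsCurveIn D γ z₁ z₂ ∧ l = qhLen D γ}

def IsUniform {E : Type*} [NormedAddCommGroup E] [NormedSpace ℝ E]
    (D : Set E) (c : ℝ) : Prop :=
  ∀ z₁ ∈ D, ∀ z₂ ∈ D, ∃ γ : ℝ → E, IsCurveIn D γ z₁ z₂ ∧
    clen γ ≤ c * dist z₁ z₂ ∧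
    ∀ t ∈ Set.Icc (0:ℝ) 1,
      min (sublen γ 0 t) (sublen γ t 1) ≤ c * dD D (γ t)

variable {E : Type*} [NormedAddCommGroup E] [NormedSpace ℝ E]

open MeasureTheory

theorem log_one_add_integral_div_le_integral_div {f g : ℝ → ℝ} {a b c : ℝ} (hab : a ≤ b)
    (hc : 0 < c) (hf : ContinuousOn f (Icc a b)) (hf0 : ∀ t ∈ Icc a b, 0 ≤ f t)
    (hg : ContinuousOn g (Icc a b)) (hg0 : ∀ t ∈ Icc a b, 0 < g t)
    (hgf : ∀ t ∈ Icc a b, g t ≤ c + ∫ u in a..t, f u) :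
    log (1 + (∫ u in a..b, f u) / c) ≤ ∫ t in a..b, f t / g t := by
  set s : ℝ → ℝ := fun t => ∫ u in a..t, f u
  have hs : ContinuousOn (fun t => c + s t) (Icc a b) := by
    refine continuousOn_const.add ?_
    have hfi : IntegrableOn f (uIcc a b) := by
      rw [uIcc_of_le hab]; exact hf.integrableOn_Icc
    rw [← uIcc_of_le hab]
    exact continuousOn_primitive_interval hfi
  have hcs : ∀ t ∈ Icc a b, 0 < c + s t := fun t ht =>
    add_pos_of_pos_of_nonneg hc
      (integral_nonneg ht.1 fun u hu => hf0 u ⟨hu.1, hu.2.trans ht.2⟩)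
  have hlog : ∀ x ∈ Ioo a b, HasDerivAt (fun t => log (c + s t)) (f x / (c + s x)) x := by
    intro x hx
    have hI : Icc a b ∈ nhds x := Icc_mem_nhds hx.1 hx.2
    have hs' : HasDerivAt s (f x) x := integral_hasDerivAt_right
      ((hf.mono (Icc_subset_Icc le_rfl hx.2.le)).intervalIntegrable_of_Icc hx.1.le)
      (AEStronglyMeasurable.stronglyMeasurableAtFilter_of_mem
        (hf.aestronglyMeasurable measurableSet_Icc) hI)
      (hf.continuousAt hI)
    exact (hs'.const_add c).log (hcs x (Ioo_subset_Icc_self hx)).ne'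
  have hftc : ∫ t in a..b, f t / (c + s t) = log (1 + s b / c) := by
    rw [integral_eq_sub_of_hasDerivAt_of_le hab (hs.log fun t ht => (hcs t ht).ne') hlog
      ((hf.div hs fun t ht => (hcs t ht).ne').intervalIntegrable_of_Icc hab),
      show s a = 0 from integral_same, add_zero,
      ← log_div (hcs b (right_mem_Icc.2 hab)).ne' hc.ne']
    congr 1
    field_simp
  rw [← hftc]
  exact integral_mono_on hab
    ((hf.div hs fun t ht => (hcs t ht).ne').intervalIntegrable_of_Icc hab)
    ((hf.div hg fun t ht => (hg0 t ht).ne').intervalIntegrable_of_Icc hab)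
    fun t ht => div_le_div_of_nonneg_left (hf0 t ht) (hg0 t ht) (hgf t ht)

theorem norm_sub_le_integral_norm_derivWithin {γ : ℝ → E} {a b s t : ℝ}
    (hγ : ContDiffOn ℝ 1 γ (Icc a b)) (has : a ≤ s) (hst : s ≤ t) (htb : t ≤ b) :
    ‖γ t - γ s‖ ≤ ∫ u in s..t, ‖derivWithin γ (Icc a b) u‖ := by
  obtain rfl | hst := hst.eq_or_lt
  · simp
  have hsub : Icc s t ⊆ Icc a b := Icc_subset_Icc has htb
  refine norm_sub_le_integral_of_norm_deriv_le_of_le hst.le (hγ.continuousOn.mono hsub)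
    (fun u hu => ((hγ.differentiableOn one_ne_zero).differentiableAt
      (Icc_mem_nhds (has.trans_lt hu.1) (hu.2.trans_le htb))).differentiableWithinAt)
    (Filter.Eventually.of_forall fun u hu => by
      rw [derivWithin_of_mem_nhds (Icc_mem_nhds (has.trans_lt hu.1) (hu.2.trans_le htb))])
    ((hγ.continuousOn_derivWithin (uniqueDiffOn_Icc (has.trans_lt (hst.trans_le htb))) le_rfl
      ).norm.mono hsub |>.intervalIntegrable_of_Icc hst.le)

theorem integral_deriv_eq_integral_derivWithin_Icc {F : Type*} [NormedAddCommGroup F]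
    [NormedSpace ℝ F] (G : ℝ → E → F) (γ : ℝ → E) {a b : ℝ} (hab : a ≤ b) :
    ∫ t in a..b, G t (deriv γ t) = ∫ t in a..b, G t (derivWithin γ (Icc a b) t) := by
  refine integral_congr_ae ?_
  filter_upwards [Measure.ae_ne volume b] with t htb ht
  rw [uIoc_of_le hab] at ht
  rw [derivWithin_of_mem_nhds (Icc_mem_nhds ht.1 (ht.2.lt_of_ne htb))]

theorem dD_pos {D : Set E} (hD : IsOpen D) (hbd : (frontier D).Nonempty) {z : E}
    (hz : z ∈ D) : 0 < dD D z :=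
  (isClosed_frontier.notMem_iff_infDist_pos hbd).1 fun hzf =>
    hzf.2 (hD.interior_eq.symm ▸ hz)

section Curves

variable {D : Set E} {γ : ℝ → E} {z₁ z₂ : E}

theorem log_one_add_clen_div_le_qhLen (hD : IsOpen D) (hbd : (frontier D).Nonempty)
    (hγ : IsCurveIn D γ z₁ z₂) :
    log (1 + clen γ / dD D z₁) ≤ qhLen D γ := by
  obtain ⟨hC1, rfl, -, hmem⟩ := hγ
  have hcont : ContinuousOn (fun t => dD D (γ t)) (Icc 0 1) :=
    (continuous_infDist_pt _).comp_continuousOn hC1.continuousOn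
  rw [clen, qhLen, integral_deriv_eq_integral_derivWithin_Icc (fun _ v => ‖v‖) γ zero_le_one,
    integral_deriv_eq_integral_derivWithin_Icc (fun t v => ‖v‖ / dD D (γ t)) γ zero_le_one]
  refine log_one_add_integral_div_le_integral_div zero_le_one
    (dD_pos hD hbd (hmem 0 (left_mem_Icc.2 zero_le_one)))
    (hC1.continuousOn_derivWithin (uniqueDiffOn_Icc zero_lt_one) le_rfl).norm
    (fun _ _ => norm_nonneg _) hcont (fun t ht => dD_pos hD hbd (hmem t ht)) fun t ht => ?_
  calc dD D (γ t) ≤ dD D (γ 0) + dist (γ t) (γ 0) := infDist_le_infDist_add_dist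
    _ ≤ _ := by
      rw [dist_eq_norm]
      gcongr
      exact norm_sub_le_integral_norm_derivWithin hC1 le_rfl ht.1 ht.2

theorem IsCurveIn.comp_one_sub (hγ : IsCurveIn D γ z₁ z₂) :
    IsCurveIn D (fun t => γ (1 - t)) z₂ z₁ := by
  obtain ⟨hC1, h0, h1, hmem⟩ := hγ
  have hmaps : MapsTo (fun t : ℝ => 1 - t) (Icc 0 1) (Icc 0 1) := fun t ht =>
    ⟨sub_nonneg.2 ht.2, sub_le_self _ ht.1⟩
  exact ⟨hC1.comp (contDiff_const.sub contDiff_id).contDiffOn hmaps, by simpa using h1,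
    by simpa using h0, fun t ht => hmem _ (hmaps ht)⟩

end Curves

theorem clen_comp_one_sub (γ : ℝ → E) : clen (fun t => γ (1 - t)) = clen γ := by
  simp only [clen, deriv_comp_const_sub, norm_neg]
  simpa using integral_comp_sub_left (fun t => ‖deriv γ t‖) (1 : ℝ) (a := 0) (b := 1)

theorem qhLen_comp_one_sub (D : Set E) (γ : ℝ → E) :
    qhLen D (fun t => γ (1 - t)) = qhLen D γ := by
  simp only [qhLen, deriv_comp_const_sub, norm_neg]
  simpa using
    integral_comp_sub_left (fun t => ‖deriv γ t‖ / dD D (γ t)) (1 : ℝ) (a := 0) (b := 1)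

theorem stmt4_general (D : Set E) (hD : IsOpen D) (hbd : (frontier D).Nonempty)
    (z₁ z₂ : E)
    (γ : ℝ → E) (hγ : IsCurveIn D γ z₁ z₂) :
    qhLen D γ ≥ Real.log (1 + clen γ / min (dD D z₁) (dD D z₂)) := by
  rcases le_total (dD D z₁) (dD D z₂) with h | h
  · rw [min_eq_left h]
    exact log_one_add_clen_div_le_qhLen hD hbd hγ
  · rw [min_eq_right h, ← clen_comp_one_sub, ← qhLen_comp_one_sub]
    exact log_one_add_clen_div_le_qhLen hD hbd hγ.comp_one_sub

theorem stmt4 (D : Set E) (hD : IsOpen D) (hbd : (frontier D).Nonempty)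
    (z₁ z₂ : E) (h₁ : z₁ ∈ D) (h₂ : z₂ ∈ D)
    (γ : ℝ → E) (hγ : IsCurveIn D γ z₁ z₂) :
    qhLen D γ ≥ Real.log (1 + clen γ / min (dD D z₁) (dD D z₂)) :=
  stmt4_general D hD hbd z₁ z₂ γ hγ
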